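/- Pauli-string parity norm bound (instance of Proposition 2.1 in Example 3.6): For n ≥ 1 let B_n := X^{⊗n} + Y^{⊗n} + Z^{⊗n} on (ℂ²)^{⊗n}. Then ‖B_n‖² ≤ 3 if n is odd, and ‖B_n‖² ≤ 9 if n is even. -/

import Mathlib

/-!
For odd `n` the three Pauli strings are Hermitian involutions that pairwise anticommute (each of
the `n` tensor factors contributes a sign `-1`), so `B_n² = 3` and the C*-identity
`‖B_n‖² = ‖B_n²‖` gives `‖B_n‖² ≤ 3`. For even `n`, each Pauli string is a Hermitian involution,
hence has norm at most `1`, and the triangle inequality gives `‖B_n‖ ≤ 3`.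
-/

open scoped BigOperators ComplexOrder

namespace Parity

variable {n : ℕ} {d : Fin n → ℕ}

/-- Kronecker product of `n` matrices, as a matrix over the product index set. -/
def kron (a : ∀ r : Fin n, Matrix (Fin (d r)) (Fin (d r)) ℂ) :
    Matrix (∀ r, Fin (d r)) (∀ r, Fin (d r)) ℂ :=
  fun i j => ∏ r, a r (i r) (j r)

/-- The ℓ²-operator norm of a complex matrix. -/
noncomputable def opNorm {I : Type*} [Fintype I] [DecidableEq I] (A : Matrix I I ℂ) : ℝ :=
  ‖Matrix.toEuclideanCLM (𝕜 := ℂ) A‖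

/-- The defect weight φ⁽ⁿ⁾ᵢⱼ. -/
noncomputable def phi {m : ℕ} (a : ∀ r : Fin n, Fin m → Matrix (Fin (d r)) (Fin (d r)) ℂ)
    (i j : Fin m) : ℝ :=
  (2 : ℝ) ^ ((1 : ℤ) - n) *
    ∑ S ∈ Finset.univ.filter (fun S : Finset (Fin n) => Even S.card),
      (∏ r ∈ S, opNorm (a r i * a r j - a r j * a r i)) *
        (∏ r ∈ Sᶜ, opNorm (a r i * a r j + a r j * a r i))

/-- A state: positive semidefinite with trace one. -/
def IsState {I : Type*} [Fintype I] (ρ : Matrix I I ℂ) : Prop :=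
  ρ.PosSemidef ∧ ρ.trace = 1

/-- The trace norm `Tr √(AᴴA)`. -/
noncomputable def traceNorm {I : Type*} [Fintype I] [DecidableEq I] (A : Matrix I I ℂ) : ℝ :=
  (((Matrix.isHermitian_conjTranspose_mul_self A).eigenvectorUnitary : Matrix I I ℂ) *
      Matrix.diagonal (fun i => (Real.sqrt ((Matrix.isHermitian_conjTranspose_mul_self A).eigenvalues i) : ℂ)) *
      (star (Matrix.isHermitian_conjTranspose_mul_self A).eigenvectorUnitary : Matrix I I ℂ)).trace.re

/-- Logarithm of a Hermitian matrix via the functional calculus (junk value otherwise);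
an eigenvalue `0` contributes `Real.log 0 = 0`. -/
noncomputable def mlog {I : Type*} [Fintype I] [DecidableEq I] (A : Matrix I I ℂ) :
    Matrix I I ℂ :=
  if hA : A.IsHermitian then
    (hA.eigenvectorUnitary : Matrix I I ℂ) *
      Matrix.diagonal (fun i => (Real.log (hA.eigenvalues i) : ℂ)) *
      (star hA.eigenvectorUnitary : Matrix I I ℂ)
  else 0

/-- Quantum relative entropy `D(ρ‖σ) = Tr(ρ (log ρ − log σ))` (natural logarithm). -/
noncomputable def relEntropy {I : Type*} [Fintype I] [DecidableEq I] (ρ σ : Matrix I I ℂ) : ℝ :=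
  (Matrix.trace (ρ * (mlog ρ - mlog σ))).re

/-- The `r`-th marginal (partial trace over all other factors). -/
noncomputable def marginal (ρ : Matrix (∀ r, Fin (d r)) (∀ r, Fin (d r)) ℂ) (r : Fin n) :
    Matrix (Fin (d r)) (Fin (d r)) ℂ :=
  fun a b => ∑ k : ∀ s, Fin (d s), if k r = a then ρ k (Function.update k r b) else 0

/-- Total correlation `I_tot(ρ) = D(ρ‖ρ₁ ⊗ ⋯ ⊗ ρₙ)`. -/
noncomputable def Itot (ρ : Matrix (∀ r, Fin (d r)) (∀ r, Fin (d r)) ℂ) : ℝ :=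
  relEntropy ρ (kron (fun r => marginal ρ r))

/-- The set of product states. -/
def ProdStates (d : Fin n → ℕ) : Set (Matrix (∀ r, Fin (d r)) (∀ r, Fin (d r)) ℂ) :=
  {σ | ∃ s : ∀ r : Fin n, Matrix (Fin (d r)) (Fin (d r)) ℂ,
    (∀ r, IsState (s r)) ∧ σ = kron s}

/-- The product threshold `Γ_prod(B)`. -/
noncomputable def Gamma (d : Fin n → ℕ) (B : Matrix (∀ r, Fin (d r)) (∀ r, Fin (d r)) ℂ) : ℝ :=
  sSup {x : ℝ | ∃ σ ∈ ProdStates d, x = (Matrix.trace (σ * B)).re}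

/-- The excess `Δ_B(ρ)`. -/
noncomputable def excess (d : Fin n → ℕ) (B ρ : Matrix (∀ r, Fin (d r)) (∀ r, Fin (d r)) ℂ) : ℝ :=
  max ((Matrix.trace (ρ * B)).re - Gamma d B) 0

end Parity

namespace PauliString

def X : Matrix (Fin 2) (Fin 2) ℂ := !![0, 1; 1, 0]
def Y : Matrix (Fin 2) (Fin 2) ℂ := !![0, -Complex.I; Complex.I, 0]
def Z : Matrix (Fin 2) (Fin 2) ℂ := !![1, 0; 0, -1]

/-- `B_n = X^{⊗n} + Y^{⊗n} + Z^{⊗n}`. -/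
def B (n : ℕ) :
    Matrix (∀ _ : Fin n, Fin 2) (∀ _ : Fin n, Fin 2) ℂ :=
  Parity.kron (d := fun _ => 2) (fun _ => X) + Parity.kron (d := fun _ => 2) (fun _ => Y) +
    Parity.kron (d := fun _ => 2) (fun _ => Z)

end PauliString

namespace Parity

open Matrix

variable {n : ℕ} {d : Fin n → ℕ}

theorem kron_mul (a b : ∀ r, Matrix (Fin (d r)) (Fin (d r)) ℂ) :
    kron a * kron b = kron (fun r => a r * b r) := by
  ext i j
  simp only [kron, mul_apply, Finset.prod_univ_sum, Fintype.piFinset_univ]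
  simp [Finset.prod_mul_distrib]

theorem kron_one : kron (d := d) (fun _ => 1) = 1 := by
  ext i j
  simp [kron, one_apply, Finset.prod_boole, funext_iff]

theorem kron_neg (a : ∀ r, Matrix (Fin (d r)) (Fin (d r)) ℂ) :
    kron (fun r => -a r) = (-1 : ℂ) ^ n • kron a := by
  ext i j
  simp [kron, Finset.prod_neg]

theorem conjTranspose_kron (a : ∀ r, Matrix (Fin (d r)) (Fin (d r)) ℂ) :
    (kron a)ᴴ = kron (fun r => (a r)ᴴ) := by
  ext i j
  simp [kron, conjTranspose_apply]

theorem isHermitian_kron {a : ∀ r, Matrix (Fin (d r)) (Fin (d r)) ℂ}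
    (ha : ∀ r, (a r).IsHermitian) : (kron a).IsHermitian := by
  simp only [IsHermitian, conjTranspose_kron, fun r => (ha r).eq]

theorem kron_mul_self_eq_one {a : ∀ r, Matrix (Fin (d r)) (Fin (d r)) ℂ}
    (ha : ∀ r, a r * a r = 1) : kron a * kron a = 1 := by
  simp only [kron_mul, ha, kron_one]

theorem kron_mul_kron_of_anticommute {a b : ∀ r, Matrix (Fin (d r)) (Fin (d r)) ℂ}
    (hab : ∀ r, a r * b r = -(b r * a r)) :
    kron a * kron b = (-1 : ℂ) ^ n • (kron b * kron a) := by
  simp only [kron_mul, hab, kron_neg]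

section opNorm

variable {I : Type*} [Fintype I] [DecidableEq I]

theorem opNorm_nonneg (A : Matrix I I ℂ) : 0 ≤ opNorm A := norm_nonneg _

theorem opNorm_add_le (A B : Matrix I I ℂ) : opNorm (A + B) ≤ opNorm A + opNorm B := by
  simp only [opNorm, map_add, norm_add_le]

theorem opNorm_one_le : opNorm (1 : Matrix I I ℂ) ≤ 1 := by
  rw [opNorm, map_one]
  exact ContinuousLinearMap.norm_id_le

theorem opNorm_natCast_le (k : ℕ) : opNorm (k : Matrix I I ℂ) ≤ k :=
  calc opNorm (k : Matrix I I ℂ) ≤ k * opNorm (1 : Matrix I I ℂ) := by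
        simp only [opNorm, map_natCast, map_one]
        exact Nat.norm_cast_le k
    _ ≤ k := mul_le_of_le_one_right k.cast_nonneg opNorm_one_le

theorem _root_.Matrix.IsHermitian.opNorm_sq {A : Matrix I I ℂ} (hA : A.IsHermitian) :
    opNorm A ^ 2 = opNorm (A * A) := by
  rw [opNorm, opNorm, map_mul, (hA.isSelfAdjoint.map _).norm_mul_self]

theorem opNorm_le_one_of_mul_self_eq_one {A : Matrix I I ℂ} (hA : A.IsHermitian)
    (h : A * A = 1) : opNorm A ≤ 1 := by
  have hsq : opNorm A ^ 2 ≤ 1 := by rw [hA.opNorm_sq, h]; exact opNorm_one_le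
  exact (pow_le_one_iff_of_nonneg (opNorm_nonneg A) two_ne_zero).mp hsq

end opNorm

theorem opNorm_kron_le_one {a : ∀ r, Matrix (Fin (d r)) (Fin (d r)) ℂ}
    (ha : ∀ r, (a r).IsHermitian) (ha' : ∀ r, a r * a r = 1) : opNorm (kron a) ≤ 1 :=
  opNorm_le_one_of_mul_self_eq_one (isHermitian_kron ha) (kron_mul_self_eq_one ha')

end Parity

theorem add_add_mul_self_of_anticommute {R : Type*} [Ring R] {a b c : R} (ha : a * a = 1)
    (hb : b * b = 1) (hc : c * c = 1) (hab : a * b = -(b * a)) (hbc : b * c = -(c * b))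
    (hca : c * a = -(a * c)) : (a + b + c) * (a + b + c) = 3 := by
  simp only [add_mul, mul_add, ha, hb, hc, hab, hbc, hca]
  abel_nf
  norm_num

namespace PauliString

open Matrix Parity

theorem X_mul_X : X * X = 1 := by
  ext i j; fin_cases i <;> fin_cases j <;> simp [X]

theorem Y_mul_Y : Y * Y = 1 := by
  ext i j; fin_cases i <;> fin_cases j <;> simp [Y]

theorem Z_mul_Z : Z * Z = 1 := by
  ext i j; fin_cases i <;> fin_cases j <;> simp [Z]

theorem X_mul_Y : X * Y = -(Y * X) := by
  ext i j; fin_cases i <;> fin_cases j <;> simp [X, Y]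

theorem Y_mul_Z : Y * Z = -(Z * Y) := by
  ext i j; fin_cases i <;> fin_cases j <;> simp [Y, Z]

theorem Z_mul_X : Z * X = -(X * Z) := by
  ext i j; fin_cases i <;> fin_cases j <;> simp [X, Z]

theorem isHermitian_X : X.IsHermitian := by
  ext i j; fin_cases i <;> fin_cases j <;> simp [X]

theorem isHermitian_Y : Y.IsHermitian := by
  ext i j; fin_cases i <;> fin_cases j <;> simp [Y]

theorem isHermitian_Z : Z.IsHermitian := by
  ext i j; fin_cases i <;> fin_cases j <;> simp [Z]

theorem isHermitian_B (n : ℕ) : (B n).IsHermitian :=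
  ((isHermitian_kron fun _ => isHermitian_X).add (isHermitian_kron fun _ => isHermitian_Y)).add
    (isHermitian_kron fun _ => isHermitian_Z)

theorem B_mul_self_of_odd {n : ℕ} (hn : Odd n) : B n * B n = 3 := by
  have anticommute : ∀ {P Q : Matrix (Fin 2) (Fin 2) ℂ}, P * Q = -(Q * P) →
      kron (d := fun _ : Fin n => 2) (fun _ => P) * kron (fun _ => Q) =
        -(kron (fun _ => Q) * kron (fun _ => P)) := fun h => by
    rw [kron_mul_kron_of_anticommute fun _ => h, hn.neg_one_pow, neg_one_smul]
  exact add_add_mul_self_of_anticommute (kron_mul_self_eq_one fun _ => X_mul_X)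
    (kron_mul_self_eq_one fun _ => Y_mul_Y) (kron_mul_self_eq_one fun _ => Z_mul_Z)
    (anticommute X_mul_Y) (anticommute Y_mul_Z) (anticommute Z_mul_X)

theorem opNorm_B_le_three (n : ℕ) : opNorm (B n) ≤ 3 :=
  calc opNorm (B n) ≤ 1 + 1 + 1 :=
        (opNorm_add_le _ _).trans <| add_le_add ((opNorm_add_le _ _).trans <| add_le_add
          (opNorm_kron_le_one (fun _ => isHermitian_X) fun _ => X_mul_X)
          (opNorm_kron_le_one (fun _ => isHermitian_Y) fun _ => Y_mul_Y))
          (opNorm_kron_le_one (fun _ => isHermitian_Z) fun _ => Z_mul_Z)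
    _ = 3 := by norm_num

end PauliString

open Parity PauliString in
theorem pauli_string_parity_norm_bound_general {n : ℕ} :
    (Odd n → opNorm (B n) ^ 2 ≤ 3) ∧ (Even n → opNorm (B n) ^ 2 ≤ 9) := by
  refine ⟨fun hn => ?_, fun _ => ?_⟩
  · rw [(isHermitian_B n).opNorm_sq, B_mul_self_of_odd hn]
    exact_mod_cast opNorm_natCast_le 3
  · calc opNorm (B n) ^ 2 ≤ 3 ^ 2 := pow_le_pow_left₀ (opNorm_nonneg _) (opNorm_B_le_three n) 2
      _ = 9 := by norm_num

open Parity PauliString in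
/-- Example 3.6: parity norm bound for the Pauli strings,
`‖B_n‖² ≤ 3` for odd `n` and `‖B_n‖² ≤ 9` for even `n`. -/
theorem pauli_string_parity_norm_bound {n : ℕ} (hn : 1 ≤ n) :
    (Odd n → opNorm (B n) ^ 2 ≤ 3) ∧ (Even n → opNorm (B n) ^ 2 ≤ 9) :=
  pauli_string_parity_norm_bound_general
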